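/- Let α > 1, β > 0, γ > 0, and let c > 0 be such that f(x) = c x^{β−1}/(γ + x)^{α+β}, x > 0, is a probability density function on (0,∞) (the beta distribution of the second kind). Then for every t > 0, E(X | X > t) = βγ/(α − 1) + ((t² + γt)/(α − 1)) r(t). -/

import Mathlib

/-!
With `f x = c x^(β-1) / (γ+x)^(α+β)`, the function `(x² + γx) f(x) = c x^β (γ+x)^(1-α-β)` has
derivative `βγ f(x) - (α-1) x f(x)` and vanishes at infinity since `α > 1`. Integrating over
`(t, ∞)` gives `(α-1) ∫_t^∞ x f(x) dx = βγ F̄(t) + (t² + γt) f(t)`; divide by `(α-1) F̄(t)`.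
-/

open MeasureTheory Set Filter Topology

lemma integrableOn_Ioi_rpow_div_add_rpow {a p q t : ℝ} (ha : 0 ≤ a) (ht : 0 < t) (hq : 0 ≤ q)
    (hpq : p - q < -1) : IntegrableOn (fun x ↦ x ^ p / (a + x) ^ q) (Ioi t) := by
  refine (integrableOn_Ioi_rpow_of_lt hpq ht).mono' ?_ ?_
  · refine ContinuousOn.aestronglyMeasurable (fun x hx ↦ ?_) measurableSet_Ioi
    have hx : 0 < x := ht.trans hx
    have hax : 0 < a + x := by positivity
    exact ((continuousAt_id.rpow_const (Or.inl hx.ne')).div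
      ((continuousAt_const.add continuousAt_id).rpow_const (Or.inl hax.ne'))
      (Real.rpow_pos_of_pos hax q).ne').continuousWithinAt
  · filter_upwards [ae_restrict_mem measurableSet_Ioi] with x hx
    have hx : 0 < x := ht.trans hx
    rw [Real.norm_of_nonneg (by positivity), Real.rpow_sub hx]
    exact div_le_div_of_nonneg_left (by positivity) (by positivity)
      (Real.rpow_le_rpow hx.le (by linarith) hq)

lemma tendsto_rpow_mul_add_rpow_atTop {a p q : ℝ} (ha : 0 ≤ a) (hq : q ≤ 0) (hpq : p + q < 0) :
    Tendsto (fun x ↦ x ^ p * (a + x) ^ q) atTop (𝓝 0) := by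
  have hlim : Tendsto (fun x : ℝ ↦ x ^ (p + q)) atTop (𝓝 0) := by
    simpa using tendsto_rpow_neg_atTop (neg_pos.2 hpq)
  refine squeeze_zero' ?_ ?_ hlim
  · filter_upwards [eventually_gt_atTop 0] with x hx
    positivity
  · filter_upwards [eventually_gt_atTop 0] with x hx
    rw [Real.rpow_add hx]
    exact mul_le_mul_of_nonneg_left (Real.rpow_le_rpow_of_nonpos hx (by linarith) hq)
      (by positivity)

noncomputable def betaPrimeDensity (c α β γ x : ℝ) : ℝ := c * x ^ (β - 1) / (γ + x) ^ (α + β)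

section BetaPrime

variable {c α β γ t x : ℝ}

lemma betaPrimeDensity_pos (hc : 0 < c) (hγ : 0 ≤ γ) (hx : 0 < x) :
    0 < betaPrimeDensity c α β γ x := by
  unfold betaPrimeDensity
  positivity

lemma integrableOn_Ioi_betaPrimeDensity (hα : 0 < α) (hβ : 0 ≤ β) (hγ : 0 ≤ γ) (ht : 0 < t) :
    IntegrableOn (betaPrimeDensity c α β γ) (Ioi t) := by
  refine IntegrableOn.congr_fun ((integrableOn_Ioi_rpow_div_add_rpow (p := β - 1) (q := α + β)
    hγ ht (by linarith) (by linarith)).const_mul c) (fun x _ ↦ ?_) measurableSet_Ioi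
  simp only [betaPrimeDensity, mul_div_assoc]

lemma integrableOn_Ioi_mul_betaPrimeDensity (hα : 1 < α) (hβ : 0 ≤ β) (hγ : 0 ≤ γ)
    (ht : 0 < t) : IntegrableOn (fun x ↦ x * betaPrimeDensity c α β γ x) (Ioi t) := by
  refine IntegrableOn.congr_fun ((integrableOn_Ioi_rpow_div_add_rpow (p := β) (q := α + β)
    hγ ht (by linarith) (by linarith)).const_mul c) (fun x hx ↦ ?_) measurableSet_Ioi
  have hx : x ≠ 0 := (ht.trans hx).ne'
  simp only [betaPrimeDensity, Real.rpow_sub_one hx]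
  field_simp

lemma mul_betaPrimeDensity_eq (hγ : 0 ≤ γ) (hx : 0 < x) :
    (x ^ 2 + γ * x) * betaPrimeDensity c α β γ x = c * x ^ β * (γ + x) ^ (1 - (α + β)) := by
  have hγx : 0 < γ + x := by positivity
  rw [betaPrimeDensity, Real.rpow_sub_one hx.ne', Real.rpow_sub hγx, Real.rpow_one]
  field_simp
  ring

lemma hasDerivAt_mul_betaPrimeDensity (hγ : 0 ≤ γ) (hx : 0 < x) :
    HasDerivAt (fun y ↦ (y ^ 2 + γ * y) * betaPrimeDensity c α β γ y)
      (β * γ * betaPrimeDensity c α β γ x - (α - 1) * (x * betaPrimeDensity c α β γ x)) x := by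
  have hγx : 0 < γ + x := by positivity
  have hpow : HasDerivAt (fun y ↦ c * y ^ β * (γ + y) ^ (1 - (α + β)))
      (c * (β * x ^ (β - 1)) * (γ + x) ^ (1 - (α + β))
        + c * x ^ β * ((1 - (α + β)) * (γ + x) ^ (1 - (α + β) - 1) * 1)) x :=
    ((Real.hasDerivAt_rpow_const (Or.inl hx.ne')).const_mul c).mul
      ((Real.hasDerivAt_rpow_const (Or.inl hγx.ne')).comp x ((hasDerivAt_id x).const_add γ))
  refine (hpow.congr_of_eventuallyEq ?_).congr_deriv ?_
  · filter_upwards [eventually_gt_nhds hx] with y hy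
    exact mul_betaPrimeDensity_eq hγ hy
  · have hsub : (γ + x) ^ (1 - (α + β)) = (γ + x) / (γ + x) ^ (α + β) := by
      rw [Real.rpow_sub hγx, Real.rpow_one]
    have hneg : (γ + x) ^ (1 - (α + β) - 1) = ((γ + x) ^ (α + β))⁻¹ := by
      rw [sub_sub_cancel_left, Real.rpow_neg hγx.le]
    rw [betaPrimeDensity, Real.rpow_sub_one hx.ne', hsub, hneg]
    field_simp
    ring

lemma tendsto_mul_betaPrimeDensity_atTop (hα : 1 < α) (hβ : 0 ≤ β) (hγ : 0 ≤ γ) :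
    Tendsto (fun x ↦ (x ^ 2 + γ * x) * betaPrimeDensity c α β γ x) atTop (𝓝 0) := by
  have hlim := (tendsto_rpow_mul_add_rpow_atTop hγ (p := β) (q := 1 - (α + β)) (by linarith)
    (by linarith)).const_mul c
  rw [mul_zero] at hlim
  refine hlim.congr' ?_
  filter_upwards [eventually_gt_atTop 0] with x hx
  rw [mul_betaPrimeDensity_eq hγ hx, mul_assoc]

lemma integral_Ioi_mul_betaPrimeDensity (hα : 1 < α) (hβ : 0 ≤ β) (hγ : 0 ≤ γ) (ht : 0 < t) :
    (α - 1) * ∫ x in Ioi t, x * betaPrimeDensity c α β γ x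
      = β * γ * (∫ x in Ioi t, betaPrimeDensity c α β γ x)
        + (t ^ 2 + γ * t) * betaPrimeDensity c α β γ t := by
  have hint := integrableOn_Ioi_betaPrimeDensity (c := c) (zero_lt_one.trans hα) hβ hγ ht
  have hmean := integrableOn_Ioi_mul_betaPrimeDensity (c := c) hα hβ hγ ht
  have hderiv : ∀ x ∈ Ici t, HasDerivAt (fun y ↦ (y ^ 2 + γ * y) * betaPrimeDensity c α β γ y)
      (β * γ * betaPrimeDensity c α β γ x - (α - 1) * (x * betaPrimeDensity c α β γ x)) x :=
    fun x hx ↦ hasDerivAt_mul_betaPrimeDensity hγ (ht.trans_le hx)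
  have hftc := integral_Ioi_of_hasDerivAt_of_tendsto' hderiv
    ((hint.const_mul _).sub (hmean.const_mul _)) (tendsto_mul_betaPrimeDensity_atTop hα hβ hγ)
  rw [integral_sub (hint.const_mul _) (hmean.const_mul _), integral_const_mul,
    integral_const_mul] at hftc
  linarith

lemma setIntegral_Ioi_betaPrimeDensity_pos (hα : 0 < α) (hβ : 0 ≤ β) (hc : 0 < c) (hγ : 0 ≤ γ)
    (ht : 0 < t) : 0 < ∫ x in Ioi t, betaPrimeDensity c α β γ x := by
  have hpos : ∀ x ∈ Ioi t, 0 < betaPrimeDensity c α β γ x :=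
    fun x hx ↦ betaPrimeDensity_pos hc hγ (ht.trans hx)
  rw [setIntegral_pos_iff_support_of_nonneg_ae
    (ae_restrict_of_forall_mem measurableSet_Ioi fun x hx ↦ (hpos x hx).le)
    (integrableOn_Ioi_betaPrimeDensity hα hβ hγ ht)]
  refine lt_of_lt_of_le ?_ (measure_mono fun x hx ↦ ⟨(hpos x hx).ne', hx⟩)
  simp [Real.volume_Ioi]

end BetaPrime

theorem conditional_mean_of_beta_second_kind
    (α β γ c : ℝ) (hα : 1 < α) (hβ : 0 < β) (hγ : 0 < γ) (hc : 0 < c)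
    (f : ℝ → ℝ)
    (hf : ∀ x, 0 < x → f x = c * x ^ (β - 1) / (γ + x) ^ (α + β))
    (Fbar : ℝ → ℝ) (hFbar : ∀ t, Fbar t = ∫ x in Set.Ioi t, f x)
    (r : ℝ → ℝ) (hr : ∀ t, r t = f t / Fbar t)
    (t : ℝ) (ht : 0 < t) :
    (∫ x in Set.Ioi t, x * f x) / Fbar t
      = β * γ / (α - 1) + ((t ^ 2 + γ * t) / (α - 1)) * r t := by
  have hfd : EqOn f (betaPrimeDensity c α β γ) (Ioi t) := fun x hx ↦ hf x (ht.trans hx)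
  have htail : Fbar t = ∫ x in Ioi t, betaPrimeDensity c α β γ x :=
    (hFbar t).trans (setIntegral_congr_fun measurableSet_Ioi hfd)
  have hmean : ∫ x in Ioi t, x * f x = ∫ x in Ioi t, x * betaPrimeDensity c α β γ x :=
    setIntegral_congr_fun measurableSet_Ioi fun x hx ↦ by rw [hfd hx]
  have hpos := setIntegral_Ioi_betaPrimeDensity_pos (zero_lt_one.trans hα) hβ.le hc hγ.le ht
  have hmoment := integral_Ioi_mul_betaPrimeDensity (c := c) hα hβ.le hγ.le ht
  have hα1 : α - 1 ≠ 0 := by linarith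
  have hft : f t = betaPrimeDensity c α β γ t := hf t ht
  rw [hr, hft, htail, hmean]
  field_simp
  linarith
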